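/- arXiv:2403.10531 — 3 statements merged into one kernel-verified Lean document; each statement's English description precedes it below -/
import Mathlib

section
/- Let (M,g) be a lightlike hypersurface, tangent to the structure vector field ζ, of an indefinite Sasakian manifold (M̄, φ̄, ζ, η, ḡ), whose second fundamental form h is recurrent with recurrence 1-form α. Then for all X, Y tangent to M: (i) A*_ξ(A*_ξ X) = 0; (ii) α(X) = −B(U, φX); (iii) B(X, φY) + B(Y, φX) − B(U, φX)u(Y) = 0; (iv) A*_ξ V = 0; (v) A*_ξ(φ(A*_ξ X)) = 0. -/
/-- An algebraic model, at the level of (local) smooth functions and vector fields, of a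
lightlike hypersurface `(M,g)`, tangent to the structure vector field `ζ`, of an
indefinite Sasakian manifold `(M̄, φ̄, ζ, η, ḡ)`, together with a chosen screen
distribution `S(TM)` (containing `ζ`, `φ̄ ξ` and `φ̄ N`), a (local) section `ξ` of the
rank-one normal bundle `TM⊥ ⊆ TM`, the associated null transversal section `N`, and all
the induced objects of the Gauss–Weingarten equations.

* `F` models the commutative `ℝ`-algebra of smooth functions on (an open subset of) `M`;
* `E` models the `F`-module of sections of the ambient tangent bundle `TM̄` restricted to `M`;
* `η(X)` is encoded throughout as `ḡ(X,ζ)`, `u(X)` as `g(X,V)`, `v(X)` as `g(X,U)` and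
  `θ(X)` as `ḡ(X,N)`. -/
structure SasakiLightlikeHypersurface (F : Type) [CommRing F] [Algebra ℝ F]
    (E : Type) [AddCommGroup E] [Module F E] where
  /-- the submodule of vector fields tangent to the hypersurface `M` -/
  TM : Submodule F E
  /-- the ambient metric `ḡ` (whose restriction to `TM` is the degenerate induced metric `g`) -/
  gbar : E →ₗ[F] E →ₗ[F] F
  gbar_symm : ∀ X Y : E, gbar X Y = gbar Y X
  /-- the directional derivative `X ⬝ f` of functions along tangent vector fields -/
  D : TM → Derivation ℝ F F
  D_add : ∀ X Y : TM, D (X + Y) = D X + D Y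
  D_smul : ∀ (f : F) (X : TM) (k : F), D (f • X) k = f * D X k
  /-- the Lie bracket of vector fields tangent to `M` -/
  bracket : TM → TM → TM
  D_bracket : ∀ (X Y : TM) (f : F), D (bracket X Y) f = D X (D Y f) - D Y (D X f)
  /-- the ambient Levi-Civita connection `∇̄`, in directions tangent to `M` -/
  nablaBar : TM → E → E
  nablaBar_add : ∀ (X Y : TM) (Z : E), nablaBar (X + Y) Z = nablaBar X Z + nablaBar Y Z
  nablaBar_smul : ∀ (f : F) (X : TM) (Z : E), nablaBar (f • X) Z = f • nablaBar X Z
  nablaBar_add' : ∀ (X : TM) (Y Z : E), nablaBar X (Y + Z) = nablaBar X Y + nablaBar X Z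
  nablaBar_leibniz : ∀ (X : TM) (f : F) (Y : E),
    nablaBar X (f • Y) = D X f • Y + f • nablaBar X Y
  nablaBar_metric : ∀ (X : TM) (Y Z : E),
    D X (gbar Y Z) = gbar (nablaBar X Y) Z + gbar Y (nablaBar X Z)
  nablaBar_torsion_free : ∀ X Y : TM,
    nablaBar X (Y : E) - nablaBar Y (X : E) = (bracket X Y : E)
  /-- a (local) section `ξ` of the rank-one lightlike normal bundle `TM⊥ ⊆ TM` -/
  xi : TM
  xi_normal : ∀ Y : TM, gbar (xi : E) (Y : E) = 0
  xi_spans : ∀ X : TM, (∀ Y : TM, gbar (X : E) (Y : E) = 0) →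
    ∃ f : F, (X : E) = f • (xi : E)
  /-- the screen distribution `S(TM)`, a nondegenerate complement of `TM⊥` in `TM` -/
  S : Submodule F E
  S_le : S ≤ TM
  S_compl : ∀ X : TM, ∃ W ∈ S, ∃ f : F, (X : E) = W + f • (xi : E)
  S_nondeg : ∀ W ∈ S, (∀ Z ∈ S, gbar W Z = 0) → W = 0
  /-- the null transversal section `N`, with `ḡ(ξ,N) = 1`, `ḡ(N,N) = 0`, `ḡ(N, S(TM)) = 0` -/
  Nt : E
  gbar_xi_Nt : gbar (xi : E) Nt = 1
  gbar_Nt_Nt : gbar Nt Nt = 0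
  gbar_Nt_S : ∀ Z ∈ S, gbar Nt Z = 0
  /-- the induced connection `∇` on `M` -/
  nabla : TM → TM → TM
  /-- the local second fundamental form `B` of `M` (the second fundamental form being
  `h(X,Y) = B(X,Y) N`) -/
  B : TM → TM → F
  /-- Gauss equation: `∇̄_X Y = ∇_X Y + B(X,Y) N` -/
  gauss : ∀ X Y : TM, nablaBar X (Y : E) = (nabla X Y : E) + B X Y • Nt
  /-- the shape operator `A_N` of `M` -/
  AN : TM → TM
  /-- the transversal `1`-form `τ`, so that the transversal connection is `∇ᵗ_X N = τ(X) N` -/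
  tau : TM → F
  /-- Weingarten equation: `∇̄_X N = −A_N X + τ(X) N` -/
  weingarten : ∀ X : TM, nablaBar X Nt = -(AN X : E) + tau X • Nt
  /-- the screen shape operator `A*_ξ` -/
  Astar : TM → TM
  /-- `∇_X ξ = −A*_ξ X − τ(X) ξ` -/
  weingarten_screen : ∀ X : TM, nablaBar X (xi : E) = -(Astar X : E) - tau X • (xi : E)
  /-- the projection `P` of `TM` onto `S(TM)`: `X = PX + θ(X) ξ`, `θ(X) = ḡ(X,N)` -/
  P : TM → TM
  P_mem : ∀ X : TM, (P X : E) ∈ S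
  P_spec : ∀ X : TM, (X : E) = (P X : E) + gbar (X : E) Nt • (xi : E)
  /-- the induced connection `∇*` on the screen distribution -/
  nablaStar : TM → TM → TM
  /-- the local second fundamental form `C` of the screen distribution -/
  C : TM → TM → F
  nablaStar_mem : ∀ (X Y : TM), (Y : E) ∈ S → (nablaStar X Y : E) ∈ S
  /-- screen Gauss equation: `∇_X PY = ∇*_X PY + C(X,PY) ξ` -/
  screen_gauss : ∀ (X Y : TM), (Y : E) ∈ S → nabla X Y = nablaStar X Y + C X Y • xi
  /-- the ambient almost contact structure tensor `φ̄` -/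
  phibar : E →ₗ[F] E
  /-- the structure vector field `ζ`, tangent to `M` and lying in the screen distribution -/
  zeta : TM
  zeta_mem : (zeta : E) ∈ S
  gbar_zeta_zeta : gbar (zeta : E) (zeta : E) = 1
  /-- `φ̄² X = −X + η(X) ζ`, where `η(X) = ḡ(X,ζ)` -/
  phibar_sq : ∀ X : E, phibar (phibar X) = -X + gbar X (zeta : E) • (zeta : E)
  /-- `ḡ(φ̄X, φ̄Y) = ḡ(X,Y) − η(X) η(Y)` -/
  phibar_metric : ∀ X Y : E,
    gbar (phibar X) (phibar Y) = gbar X Y - gbar X (zeta : E) * gbar Y (zeta : E)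
  /-- Sasakian condition: `(∇̄_X φ̄) Y = ḡ(X,Y) ζ − η(Y) X` -/
  sasaki : ∀ (X : TM) (Y : E), nablaBar X (phibar Y) - phibar (nablaBar X Y)
    = gbar (X : E) Y • (zeta : E) - gbar Y (zeta : E) • (X : E)
  /-- `∇̄_X ζ = −φ̄ X` -/
  sasaki_zeta : ∀ X : TM, nablaBar X (zeta : E) = -(phibar (X : E))
  /-- `U = −φ̄ N`, tangent to `M` and lying in the screen distribution -/
  U : TM
  U_mem : (U : E) ∈ S
  U_spec : (U : E) = -(phibar Nt)
  /-- `V = −φ̄ ξ`, tangent to `M` and lying in the screen distribution -/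
  V : TM
  V_mem : (V : E) ∈ S
  V_spec : (V : E) = -(phibar (xi : E))
  /-- the induced structure tensor `φ` on `M` -/
  phi : TM → TM
  /-- `φ̄ X = φ X + u(X) N`, where `u(X) = g(X,V)` -/
  phi_spec : ∀ X : TM, phibar (X : E) = (phi X : E) + gbar (X : E) (V : E) • Nt

/-!
Without any recurrence, the Gauss–Weingarten and Sasakian
equations give `B(X,Y) = ḡ(A*_ξ X, Y)`, `B(X,ζ) = -u(X)`, `∇_X ζ = -φX` and
`X(u(Y)) = u(∇_X Y) - B(X,φY) - τ(X) u(Y)`. Evaluating the recurrence `(∇_X B)(Y,Z) = α(X) B(Y,Z)`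
at `Z = ξ` gives `B(Y, A*_ξ X) = 0`, hence (i); at `Z = ζ` it gives
`B(X,φY) + B(Y,φX) + α(X) u(Y) = 0`, and the remaining items are specialisations of this
identity (`Y = U` for (ii), `X = V` or `Y = ξ` for (iv), `Y = A*_ξ X` for (v)), combined with
`φ² = -I + η ⊗ ζ + u ⊗ U` on `TM`.
-/

namespace SasakiLightlikeHypersurface

variable {F : Type} [CommRing F] [Algebra ℝ F] {E : Type} [AddCommGroup E] [Module F E]
  (H : SasakiLightlikeHypersurface F E)

theorem gbar_xi_right (Y : H.TM) : H.gbar (Y : E) (H.xi : E) = 0 := by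
  rw [H.gbar_symm]; exact H.xi_normal Y

theorem gbar_Nt_xi : H.gbar H.Nt (H.xi : E) = 1 := by
  rw [H.gbar_symm]; exact H.gbar_xi_Nt

theorem gbar_Nt_zeta : H.gbar H.Nt (H.zeta : E) = 0 :=
  H.gbar_Nt_S _ H.zeta_mem

theorem B_eq_gbar_Astar (X Y : H.TM) : H.B X Y = H.gbar (H.Astar X : E) (Y : E) := by
  have h := H.nablaBar_metric X (Y : E) (H.xi : E)
  rw [H.gbar_xi_right Y, H.gauss X Y, H.weingarten_screen X] at h
  simp only [map_zero, map_add, map_sub, map_neg, map_smul, LinearMap.add_apply,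
    LinearMap.smul_apply, smul_eq_mul, gbar_xi_right, gbar_Nt_xi, mul_one, mul_zero,
    zero_add, sub_zero] at h
  linear_combination -h + H.gbar_symm (Y : E) (H.Astar X : E)

theorem B_comm (X Y : H.TM) : H.B X Y = H.B Y X := by
  have h := congrArg (fun e => H.gbar e (H.xi : E)) (H.nablaBar_torsion_free X Y)
  rw [H.gauss X Y, H.gauss Y X] at h
  simp only [map_add, map_sub, map_smul, LinearMap.add_apply, LinearMap.sub_apply,
    LinearMap.smul_apply, smul_eq_mul, gbar_xi_right, gbar_Nt_xi, mul_one, zero_add] at h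
  linear_combination h

theorem B_xi_right (X : H.TM) : H.B X H.xi = 0 :=
  (H.B_eq_gbar_Astar X H.xi).trans (H.gbar_xi_right _)

theorem B_xi_left (X : H.TM) : H.B H.xi X = 0 :=
  (H.B_comm _ _).trans (H.B_xi_right X)

theorem gbar_Astar_Nt (X : H.TM) : H.gbar (H.Astar X : E) H.Nt = 0 := by
  have h := H.nablaBar_metric X (H.xi : E) H.Nt
  rw [H.gbar_xi_Nt, H.weingarten_screen X, H.weingarten X] at h
  simp only [Derivation.map_one_eq_zero, map_add, map_sub, map_neg, map_smul,
    LinearMap.sub_apply, LinearMap.neg_apply, LinearMap.smul_apply, smul_eq_mul,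
    H.xi_normal, H.gbar_xi_Nt, mul_one] at h
  linear_combination h

theorem gbar_Nt_Astar (X : H.TM) : H.gbar H.Nt (H.Astar X : E) = 0 :=
  (H.gbar_symm _ _).trans (H.gbar_Astar_Nt X)

theorem eq_zero_of_gbar_eq_zero (X : H.TM) (hTM : ∀ Y : H.TM, H.gbar (X : E) (Y : E) = 0)
    (hNt : H.gbar (X : E) H.Nt = 0) : X = 0 := by
  obtain ⟨f, hf⟩ := H.xi_spans X hTM
  rw [hf, map_smul, LinearMap.smul_apply, smul_eq_mul, H.gbar_xi_Nt, mul_one] at hNt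
  rw [hNt, zero_smul] at hf
  exact Subtype.ext hf

theorem Astar_eq_zero_of_B_eq_zero (X : H.TM) (hB : ∀ Y : H.TM, H.B X Y = 0) :
    H.Astar X = 0 :=
  H.eq_zero_of_gbar_eq_zero _ (fun Y => (H.B_eq_gbar_Astar X Y).symm.trans (hB Y))
    (H.gbar_Astar_Nt X)

theorem nabla_xi (X : H.TM) :
    (H.nabla X H.xi : E) = -(H.Astar X : E) - H.tau X • (H.xi : E) := by
  have h := H.gauss X H.xi
  rw [H.weingarten_screen X, H.B_xi_right X, zero_smul, add_zero] at h
  exact h.symm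

theorem phibar_Nt : H.phibar H.Nt = -(H.U : E) := by rw [H.U_spec, neg_neg]

theorem phibar_xi : H.phibar (H.xi : E) = -(H.V : E) := by rw [H.V_spec, neg_neg]

theorem phibar_U : H.phibar (H.U : E) = H.Nt := by
  rw [H.U_spec, map_neg, H.phibar_sq, H.gbar_Nt_zeta, zero_smul, add_zero, neg_neg]

theorem phibar_V : H.phibar (H.V : E) = (H.xi : E) := by
  rw [H.V_spec, map_neg, H.phibar_sq, H.xi_normal H.zeta, zero_smul, add_zero, neg_neg]

theorem gbar_phibar_xi (Y : H.TM) :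
    H.gbar (H.phibar (Y : E)) (H.xi : E) = H.gbar (Y : E) (H.V : E) := by
  rw [H.phi_spec Y, map_add, map_smul, LinearMap.add_apply, LinearMap.smul_apply,
    gbar_xi_right, gbar_Nt_xi, smul_eq_mul, mul_one, zero_add]

theorem gbar_U_V : H.gbar (H.U : E) (H.V : E) = 1 := by
  rw [← H.gbar_phibar_xi, H.phibar_U, H.gbar_Nt_xi]

theorem gbar_xi_V : H.gbar (H.xi : E) (H.V : E) = 0 := by
  rw [← H.gbar_phibar_xi, H.phibar_xi, map_neg, LinearMap.neg_apply, gbar_xi_right, neg_zero]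

theorem gbar_V_V : H.gbar (H.V : E) (H.V : E) = 0 := by
  rw [← H.gbar_phibar_xi, H.phibar_V, gbar_xi_right]

theorem phi_U : (H.phi H.U : E) = 0 := by
  have h := H.phi_spec H.U
  rw [H.phibar_U, H.gbar_U_V, one_smul] at h
  exact right_eq_add.mp h

theorem phi_V : (H.phi H.V : E) = (H.xi : E) := by
  have h := H.phi_spec H.V
  rw [H.phibar_V, H.gbar_V_V, zero_smul, add_zero] at h
  exact h.symm

theorem phi_xi : (H.phi H.xi : E) = -(H.V : E) := by
  have h := H.phi_spec H.xi
  rw [H.phibar_xi, H.gbar_xi_V, zero_smul, add_zero] at h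
  exact h.symm

theorem B_zeta (X : H.TM) : H.B X H.zeta = -H.gbar (X : E) (H.V : E) := by
  have h := congrArg (fun e => H.gbar e (H.xi : E)) (H.gauss X H.zeta)
  rw [H.sasaki_zeta X] at h
  simp only [map_neg, map_add, map_smul, LinearMap.neg_apply, LinearMap.add_apply,
    LinearMap.smul_apply, smul_eq_mul, gbar_phibar_xi, gbar_xi_right, gbar_Nt_xi, mul_one,
    zero_add] at h
  linear_combination -h

theorem nabla_zeta (X : H.TM) : (H.nabla X H.zeta : E) = -(H.phi X : E) := by
  have h := H.gauss X H.zeta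
  rw [H.sasaki_zeta X, H.phi_spec X, H.B_zeta X, neg_smul, neg_add] at h
  exact (add_right_cancel h).symm

theorem phibar_phi (Y : H.TM) : H.phibar (H.phi Y : E)
    = -(Y : E) + H.gbar (Y : E) (H.zeta : E) • (H.zeta : E)
      + H.gbar (Y : E) (H.V : E) • (H.U : E) := by
  have h := H.phibar_sq (Y : E)
  rw [H.phi_spec Y, map_add, map_smul, H.phibar_Nt, smul_neg] at h
  rw [← h, neg_add_cancel_right]

theorem gbar_phi_V (Y : H.TM) : H.gbar (H.phi Y : E) (H.V : E) = 0 := by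
  have h := congrArg (fun e => H.gbar e (H.xi : E)) (H.phibar_phi Y)
  simp only [map_add, map_neg, map_smul, LinearMap.add_apply, LinearMap.neg_apply,
    LinearMap.smul_apply, smul_eq_mul, gbar_phibar_xi, gbar_xi_right, mul_zero,
    add_zero, neg_zero] at h
  exact h

theorem phi_phi (Y : H.TM) : (H.phi (H.phi Y) : E)
    = -(Y : E) + H.gbar (Y : E) (H.zeta : E) • (H.zeta : E)
      + H.gbar (Y : E) (H.V : E) • (H.U : E) := by
  rw [← H.phibar_phi, H.phi_spec, H.gbar_phi_V, zero_smul, add_zero]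

theorem D_gbar_V (X Y : H.TM) : H.D X (H.gbar (Y : E) (H.V : E))
    = H.gbar (H.nabla X Y : E) (H.V : E) - H.B X (H.phi Y)
      - H.tau X * H.gbar (Y : E) (H.V : E) := by
  have h := H.nablaBar_metric X (H.phibar (Y : E)) (H.xi : E)
  have hsasaki := H.sasaki X (Y : E)
  rw [H.gauss X Y, map_add, map_smul, sub_eq_iff_eq_add] at hsasaki
  rw [H.gbar_phibar_xi, hsasaki, H.weingarten_screen, H.phi_spec Y, H.phibar_Nt] at h
  simp only [map_add, map_sub, map_neg, map_smul, LinearMap.add_apply, LinearMap.sub_apply,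
    LinearMap.neg_apply, LinearMap.smul_apply, smul_eq_mul, gbar_xi_right, gbar_Nt_xi,
    gbar_Nt_Astar, gbar_phibar_xi, mul_one, mul_zero, zero_add, add_zero, neg_zero,
    sub_zero] at h
  rw [H.B_eq_gbar_Astar X (H.phi Y), H.gbar_symm (H.Astar X : E)]
  linear_combination h

/-- Since `∇ᵗ_X N = τ(X) N`, this is the coefficient of `N` in `(∇_X h)(Y,Z)`. -/
def covDerivB (X Y Z : H.TM) : F :=
  H.D X (H.B Y Z) + H.B Y Z * H.tau X - H.B (H.nabla X Y) Z - H.B Y (H.nabla X Z)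

def IsRecurrentWith (α : H.TM → F) : Prop :=
  ∀ X Y Z : H.TM, H.covDerivB X Y Z = α X * H.B Y Z

variable {H}

theorem isRecurrentWith_of_smul_Nt {α : H.TM → F}
    (hrec : ∀ X Y Z : H.TM,
      (H.D X (H.B Y Z) + H.B Y Z * H.tau X) • H.Nt
        - H.B (H.nabla X Y) Z • H.Nt - H.B Y (H.nabla X Z) • H.Nt
        = (α X * H.B Y Z) • H.Nt) :
    H.IsRecurrentWith α := by
  intro X Y Z
  have h := congrArg (H.gbar (H.xi : E)) (hrec X Y Z)
  simp only [map_sub, map_smul, H.gbar_xi_Nt, smul_eq_mul, mul_one] at h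
  unfold covDerivB
  linear_combination h

namespace IsRecurrentWith

variable {α : H.TM → F}

theorem B_Astar (hα : H.IsRecurrentWith α) (X Y : H.TM) : H.B Y (H.Astar X) = 0 := by
  have h := hα X Y H.xi
  simp only [covDerivB, B_xi_right, map_zero, zero_mul, mul_zero, sub_zero, zero_sub,
    add_zero, neg_eq_zero] at h
  rwa [H.B_eq_gbar_Astar Y, H.nabla_xi, map_sub, map_neg, map_smul, gbar_xi_right,
    smul_zero, sub_zero, neg_eq_zero, ← H.B_eq_gbar_Astar] at h

theorem Astar_Astar (hα : H.IsRecurrentWith α) (X : H.TM) : H.Astar (H.Astar X) = 0 :=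
  H.Astar_eq_zero_of_B_eq_zero _ fun Y => (H.B_comm _ _).trans (hα.B_Astar X Y)

theorem B_phi_add_B_phi (hα : H.IsRecurrentWith α) (X Y : H.TM) :
    H.B X (H.phi Y) + H.B Y (H.phi X) + α X * H.gbar (Y : E) (H.V : E) = 0 := by
  have h := hα X Y H.zeta
  have hYφX : H.B Y (H.nabla X H.zeta) = -H.B Y (H.phi X) := by
    rw [H.B_eq_gbar_Astar, H.B_eq_gbar_Astar, H.nabla_zeta X, map_neg]
  simp only [covDerivB, B_zeta, hYφX, map_neg] at h
  linear_combination h + H.D_gbar_V X Y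

theorem eq_neg_B_U_phi (hα : H.IsRecurrentWith α) (X : H.TM) :
    α X = -H.B H.U (H.phi X) := by
  have h := hα.B_phi_add_B_phi X H.U
  rw [H.B_eq_gbar_Astar X, H.phi_U, map_zero, H.gbar_U_V, mul_one, zero_add] at h
  linear_combination h

theorem B_V (hα : H.IsRecurrentWith α) (Y : H.TM) : H.B H.V Y = 0 := by
  have hαV : α H.V = 0 := by
    rw [hα.eq_neg_B_U_phi, H.B_eq_gbar_Astar, H.phi_V, gbar_xi_right, neg_zero]
  have hVφ : ∀ Z : H.TM, H.B H.V (H.phi Z) = 0 := fun Z => by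
    have h := hα.B_phi_add_B_phi H.V Z
    rwa [H.B_eq_gbar_Astar Z (H.phi H.V), H.phi_V, gbar_xi_right, hαV, zero_mul, add_zero,
      add_zero] at h
  have hVU : H.B H.V H.U = 0 := by
    have h := hα.B_phi_add_B_phi H.U H.xi
    rw [H.B_xi_left, H.gbar_xi_V, mul_zero, add_zero, add_zero, H.B_eq_gbar_Astar, H.phi_xi,
      map_neg, neg_eq_zero, ← H.B_eq_gbar_Astar] at h
    rwa [H.B_comm]
  have h := hVφ (H.phi Y)
  rw [H.B_eq_gbar_Astar, H.phi_phi] at h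
  simp only [map_add, map_neg, map_smul, smul_eq_mul, ← H.B_eq_gbar_Astar, B_zeta, hVU,
    gbar_V_V, neg_zero, mul_zero, add_zero, neg_eq_zero] at h
  exact h

theorem Astar_V (hα : H.IsRecurrentWith α) : H.Astar H.V = 0 :=
  H.Astar_eq_zero_of_B_eq_zero H.V hα.B_V

theorem Astar_phi_Astar (hα : H.IsRecurrentWith α) (X : H.TM) :
    H.Astar (H.phi (H.Astar X)) = 0 := by
  refine H.Astar_eq_zero_of_B_eq_zero _ fun W => ?_
  have h := hα.B_phi_add_B_phi W (H.Astar X)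
  have hAV : H.gbar (H.Astar X : E) (H.V : E) = 0 := by
    rw [← H.B_eq_gbar_Astar, H.B_comm, hα.B_V]
  rwa [H.B_comm (H.Astar X), hα.B_Astar, hAV, mul_zero, add_zero, add_zero, H.B_comm] at h

end IsRecurrentWith

end SasakiLightlikeHypersurface

/-- Let `(M,g)` be a lightlike hypersurface, tangent to the structure vector field `ζ`, of
an indefinite Sasakian manifold `(M̄, φ̄, ζ, η, ḡ)`, whose second fundamental form
`h = B ⊗ N` is recurrent with recurrence `1`-form `α`. Then for all `X, Y` tangent
to `M`: (i) `A*_ξ (A*_ξ X) = 0`; (ii) `α(X) = −B(U, φX)`;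
(iii) `B(X, φY) + B(Y, φX) − B(U, φX) u(Y) = 0`, where `u(Y) = g(Y,V)`;
(iv) `A*_ξ V = 0`; (v) `A*_ξ (φ (A*_ξ X)) = 0`. -/
theorem recurrent_h_consequences
    (F : Type) [CommRing F] [Algebra ℝ F]
    (E : Type) [AddCommGroup E] [Module F E]
    (H : SasakiLightlikeHypersurface F E)
    (α : H.TM →ₗ[F] F)
    (hrec : ∀ X Y Z : H.TM,
      (H.D X (H.B Y Z) + H.B Y Z * H.tau X) • H.Nt
        - H.B (H.nabla X Y) Z • H.Nt - H.B Y (H.nabla X Z) • H.Nt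
        = (α X * H.B Y Z) • H.Nt) :
    (∀ X : H.TM, H.Astar (H.Astar X) = 0)
    ∧ (∀ X : H.TM, α X = -(H.B H.U (H.phi X)))
    ∧ (∀ X Y : H.TM,
        H.B X (H.phi Y) + H.B Y (H.phi X)
          - H.B H.U (H.phi X) * H.gbar (Y : E) (H.V : E) = 0)
    ∧ H.Astar H.V = 0
    ∧ (∀ X : H.TM, H.Astar (H.phi (H.Astar X)) = 0) := by
  have hα : H.IsRecurrentWith α :=
    SasakiLightlikeHypersurface.isRecurrentWith_of_smul_Nt hrec
  refine ⟨hα.Astar_Astar, hα.eq_neg_B_U_phi, fun X Y => ?_, hα.Astar_V, hα.Astar_phi_Astar⟩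
  linear_combination hα.B_phi_add_B_phi X Y - H.gbar (Y : E) (H.V : E) * hα.eq_neg_B_U_phi X
end

section
/- Let (M,g) be a lightlike hypersurface, tangent to the structure vector field ζ, of an indefinite Sasakian manifold (M̄, φ̄, ζ, η, ḡ). Then B(X, U) = C(X, V) for every X tangent to M, where U = −φ̄N and V = −φ̄ξ. -/
/-- Let `(M,g)` be a lightlike hypersurface, tangent to the structure vector field `ζ`, of
an indefinite Sasakian manifold `(M̄, φ̄, ζ, η, ḡ)`. Then `B(X, U) = C(X, V)` for every
`X` tangent to `M`, where `U = −φ̄N` and `V = −φ̄ξ`. -/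
theorem B_U_eq_C_V
    (F : Type) [CommRing F] [Algebra ℝ F]
    (E : Type) [AddCommGroup E] [Module F E]
    (H : SasakiLightlikeHypersurface F E) :
    ∀ X : H.TM, H.B X H.U = H.C X H.V := by
  intro X
  -- η(φ̄Y) = 0 for Y tangent to M
  have key : ∀ Y : H.TM, H.gbar (H.phibar (Y : E)) (H.zeta : E) = 0 := by
    intro Y
    have h0 : H.D Y (H.gbar (H.zeta : E) (H.zeta : E)) = 0 := by
      rw [H.gbar_zeta_zeta]
      exact Derivation.map_one_eq_zero _
    rw [H.nablaBar_metric, H.sasaki_zeta] at h0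
    have hsymm := H.gbar_symm (H.zeta : E) (-(H.phibar (Y : E)))
    rw [hsymm] at h0
    have h2 : (2 : ℝ) • H.gbar (-(H.phibar (Y : E))) (H.zeta : E) = 0 := by
      rw [two_smul]; rw [← h0]
    rcases smul_eq_zero.mp h2 with h | h
    · exact absurd h two_ne_zero
    · have : H.gbar (-(H.phibar (Y : E))) (H.zeta : E)
          = -(H.gbar (H.phibar (Y : E)) (H.zeta : E)) := by
        simp
      rw [this] at h
      exact neg_eq_zero.mp h
  have hVζ : H.gbar (H.V : E) (H.zeta : E) = 0 := by
    rw [H.V_spec]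
    simpa using key H.xi
  -- ξ = φ̄ V
  have hξV : H.phibar (H.V : E) = (H.xi : E) := by
    rw [H.V_spec, map_neg, H.phibar_sq, H.xi_normal H.zeta]
    simp
  -- negation under ∇̄_X in the second slot
  have h00 : H.nablaBar X 0 = 0 := by
    have := H.nablaBar_add' X 0 0
    simpa using this.symm
  have hneg : ∀ Y : E, H.nablaBar X (-Y) = -(H.nablaBar X Y) := by
    intro Y
    have h1 : H.nablaBar X Y + H.nablaBar X (-Y) = 0 := by
      rw [← H.nablaBar_add' X, add_neg_cancel, h00]
    exact (add_eq_zero_iff_neg_eq.mp h1).symm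
  -- both sides equal ḡ(A_N X, V)
  -- Left side: B X U = ḡ(∇̄_X U, ξ)
  have hBU : H.B X H.U = H.gbar (H.nablaBar X (H.U : E)) (H.xi : E) := by
    rw [H.gauss X H.U]
    rw [map_add, LinearMap.add_apply, map_smul, LinearMap.smul_apply,
      H.gbar_symm ((H.nabla X H.U : E)) (H.xi : E), H.xi_normal,
      H.gbar_symm H.Nt (H.xi : E), H.gbar_xi_Nt]
    simp [smul_eq_mul]
  -- ∇̄_X U = -φ̄(∇̄_X N) - ḡ(X,N) ζ
  have hsas := H.sasaki X H.Nt
  have hNζ : H.gbar H.Nt (H.zeta : E) = 0 := H.gbar_Nt_S _ H.zeta_mem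
  rw [hNζ, zero_smul, sub_zero] at hsas
  have hU : H.nablaBar X (H.U : E)
      = -(H.phibar (H.nablaBar X H.Nt)) - H.gbar (X : E) H.Nt • (H.zeta : E) := by
    rw [H.U_spec, hneg]
    have : H.nablaBar X (H.phibar H.Nt)
        = H.phibar (H.nablaBar X H.Nt) + H.gbar (X : E) H.Nt • (H.zeta : E) := by
      have := sub_eq_iff_eq_add.mp hsas
      rw [this]; abel
    rw [this]; abel
  -- compute ḡ(∇̄_X U, ξ)
  have hζξ : H.gbar (H.zeta : E) (H.xi : E) = 0 := by
    rw [H.gbar_symm]; exact H.xi_normal H.zeta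
  have hmain : H.gbar (H.nablaBar X (H.U : E)) (H.xi : E)
      = H.gbar (H.AN X : E) (H.V : E) := by
    rw [hU]
    have h1 : H.gbar (H.phibar (H.nablaBar X H.Nt)) (H.xi : E)
        = H.gbar (H.nablaBar X H.Nt) (H.V : E) := by
      rw [← hξV, H.phibar_metric, hVζ, mul_zero, sub_zero]
    rw [map_sub, LinearMap.sub_apply, map_neg, LinearMap.neg_apply, h1,
      map_smul, LinearMap.smul_apply, hζξ, smul_zero, sub_zero]
    rw [H.weingarten]
    have hVN : H.gbar (H.V : E) H.Nt = 0 := by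
      rw [H.gbar_symm]; exact H.gbar_Nt_S _ H.V_mem
    simp [hVN, H.gbar_symm H.Nt (H.V : E)]
  -- Right side: C X V = ḡ(∇̄_X V, N)
  have hVN : H.gbar (H.V : E) H.Nt = 0 := by
    rw [H.gbar_symm]; exact H.gbar_Nt_S _ H.V_mem
  have hCV : H.C X H.V = H.gbar (H.nablaBar X (H.V : E)) H.Nt := by
    rw [H.gauss X H.V, H.screen_gauss X H.V H.V_mem]
    push_cast
    rw [map_add, LinearMap.add_apply, map_add, LinearMap.add_apply,
      map_smul, LinearMap.smul_apply, map_smul, LinearMap.smul_apply,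
      H.gbar_xi_Nt, H.gbar_Nt_Nt,
      H.gbar_symm ((H.nablaStar X H.V : E)) H.Nt,
      H.gbar_Nt_S _ (H.nablaStar_mem X H.V H.V_mem)]
    simp [smul_eq_mul]
  -- metric compatibility: ḡ(∇̄_X V, N) = -ḡ(V, ∇̄_X N)
  have hmet := H.nablaBar_metric X (H.V : E) H.Nt
  rw [hVN] at hmet
  have hDV : H.D X (0 : F) = 0 := map_zero _
  rw [hDV] at hmet
  have hfin : H.gbar (H.nablaBar X (H.V : E)) H.Nt
      = H.gbar (H.AN X : E) (H.V : E) := by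
    have h2 : H.gbar (H.nablaBar X (H.V : E)) H.Nt
        = -(H.gbar (H.V : E) (H.nablaBar X H.Nt)) := by
      linear_combination -hmet
    rw [h2, H.weingarten]
    simp [hVN, H.gbar_symm (H.V : E) (H.AN X : E)]
  rw [hBU, hmain, hCV, hfin]
end

section
/- Let (M,g) be a lightlike hypersurface, tangent to the structure vector field ζ, of an indefinite Sasakian manifold (M̄, φ̄, ζ, η, ḡ). Then the induced structure tensor φ satisfies (∇_X φ)(Y) = g(X,Y)ζ − η(Y)X − B(X,Y)U + u(Y)A_N X for all X, Y tangent to M, where (∇_X φ)(Y) := ∇_X(φY) − φ(∇_X Y). -/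
/-- Let `(M,g)` be a lightlike hypersurface, tangent to the structure vector field `ζ`, of
an indefinite Sasakian manifold `(M̄, φ̄, ζ, η, ḡ)`. Then the induced structure tensor `φ`
satisfies `(∇_X φ)(Y) = ∇_X (φY) − φ(∇_X Y) = g(X,Y) ζ − η(Y) X − B(X,Y) U + u(Y) A_N X`
for all `X, Y` tangent to `M`, where `η(Y) = ḡ(Y,ζ)` and `u(Y) = g(Y,V)`. -/
theorem nabla_phi
    (F : Type) [CommRing F] [Algebra ℝ F]
    (E : Type) [AddCommGroup E] [Module F E]
    (H : SasakiLightlikeHypersurface F E) :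
    ∀ X Y : H.TM,
      H.nabla X (H.phi Y) - H.phi (H.nabla X Y)
        = H.gbar (X : E) (Y : E) • H.zeta - H.gbar (Y : E) (H.zeta : E) • X
            - H.B X Y • H.U + H.gbar (Y : E) (H.V : E) • H.AN X := by
  intro X Y
  set uY := H.gbar (Y : E) (H.V : E) with huY
  have h1 : H.nablaBar X (H.phibar (Y : E))
      = (H.nabla X (H.phi Y) : E)
        + (H.B X (H.phi Y) + H.D X uY + uY * H.tau X) • H.Nt
        - uY • (H.AN X : E) := by
    rw [H.phi_spec Y, H.nablaBar_add', H.nablaBar_leibniz, H.weingarten, H.gauss]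
    module
  have h2 : H.phibar (H.nablaBar X (Y : E))
      = (H.phi (H.nabla X Y) : E)
        + H.gbar (H.nabla X Y : E) (H.V : E) • H.Nt
        - H.B X Y • (H.U : E) := by
    rw [H.gauss, map_add, map_smul, H.phi_spec, H.U_spec]
    module
  have hs := H.sasaki X (Y : E)
  rw [h1, h2] at hs
  set c := H.gbar (H.nabla X Y : E) (H.V : E)
      - (H.B X (H.phi Y) + H.D X uY + uY * H.tau X) with hc
  set T : H.TM := H.nabla X (H.phi Y) - H.phi (H.nabla X Y)
      - (H.gbar (X : E) (Y : E) • H.zeta - H.gbar (Y : E) (H.zeta : E) • X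
          - H.B X Y • H.U + uY • H.AN X) with hT
  have hTE : (T : E) = c • H.Nt := by
    rw [hT]
    push_cast
    linear_combination (norm := module) hs
  have hc0 : c = 0 := by
    have e1 : H.gbar (H.xi : E) (T : E) = 0 := H.xi_normal T
    rw [hTE, map_smul, smul_eq_mul, H.gbar_xi_Nt, mul_one] at e1
    exact e1
  have hT0 : T = 0 := by
    have : (T : E) = 0 := by rw [hTE, hc0, zero_smul]
    exact_mod_cast this
  rw [hT] at hT0
  linear_combination (norm := module) hT0
end
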